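/- Let κ > 0, b ≠ 0, ζ > 0, T > 0 and set Δ := 2 b^2 ζ - κ^2. If either Δ ≤ 0, or Δ > 0 and T < (π - arctan(sqrt(Δ)/κ)) / sqrt(Δ), then there exists a differentiable function g : [0,T] → ℝ with g(T) = 0, g(t) ≥ 0 for all t ∈ [0,T], and g'(t) = -2 b^2 g(t)^2 + 2κ g(t) - ζ on [0,T]; moreover this solution is unique among differentiable functions on [0,T] with terminal value 0. -/

import Mathlib

/-!
In reversed time `τ = T - t`, the substitution `g = ζ s / (s' + κ s)` turns the Riccati equation
into the linear equation `s'' = (κ² - 2b²ζ) s` with `s 0 = 0`, solved by `τ`, `sinh (μ τ)` or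
`sin (ω τ)` according to the sign of `Δ = 2b²ζ - κ²`. The resulting `g` is a nonnegative solution
as long as `s ≥ 0` and the denominator `s' + κ s` stays positive. In the oscillatory case
`ω cos θ + κ sin θ` is a positive multiple of `sin (θ + arctan (ω / κ))`, which is where the bound
`ω T < π - arctan (ω / κ)` comes from. Uniqueness holds because the polynomial vector field is
Lipschitz on the compact set swept out by two solutions.
-/

open Real Set

def IsNonnegRiccatiSolution (b κ ζ T : ℝ) (g : ℝ → ℝ) : Prop :=
  g T = 0 ∧ (∀ t ∈ Icc 0 T, 0 ≤ g t) ∧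
    ∀ t ∈ Icc 0 T, HasDerivAt g (-2 * b ^ 2 * g t ^ 2 + 2 * κ * g t - ζ) t

theorem eqOn_Icc_of_hasDerivAt_of_contDiff {E : Type*} [NormedAddCommGroup E] [NormedSpace ℝ E]
    {f : E → E} (hf : ContDiff ℝ 1 f) {u w : ℝ → E} {a b : ℝ}
    (hu : ∀ t ∈ Icc a b, HasDerivAt u (f (u t)) t)
    (hw : ∀ t ∈ Icc a b, HasDerivAt w (f (w t)) t)
    (hb : u b = w b) : EqOn u w (Icc a b) := by
  have hu_cont : ContinuousOn u (Icc a b) := HasDerivAt.continuousOn hu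
  have hw_cont : ContinuousOn w (Icc a b) := HasDerivAt.continuousOn hw
  set S := u '' Icc a b ∪ w '' Icc a b
  have hS : IsCompact S := (isCompact_Icc.image_of_continuousOn hu_cont).union
    (isCompact_Icc.image_of_continuousOn hw_cont)
  obtain ⟨K, hK⟩ :=
    (hf.locallyLipschitz.locallyLipschitzOn (s := S)).exists_lipschitzOnWith_of_compact hS
  exact ODE_solution_unique_of_mem_Icc_left (v := fun _ => f) (s := fun _ => S) (fun _ _ => hK)
    hu_cont (fun t ht => (hu t (Ioc_subset_Icc_self ht)).hasDerivWithinAt)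
    (fun t ht => Or.inl (mem_image_of_mem u (Ioc_subset_Icc_self ht)))
    hw_cont (fun t ht => (hw t (Ioc_subset_Icc_self ht)).hasDerivWithinAt)
    (fun t ht => Or.inr (mem_image_of_mem w (Ioc_subset_Icc_self ht))) hb

theorem hasDerivAt_riccati_of_linear {s c : ℝ → ℝ} {b κ ζ τ : ℝ}
    (hs : HasDerivAt s (c τ) τ) (hc : HasDerivAt c ((κ ^ 2 - 2 * b ^ 2 * ζ) * s τ) τ)
    (hD : c τ + κ * s τ ≠ 0) :
    HasDerivAt (fun τ => ζ * s τ / (c τ + κ * s τ))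
      (-(-2 * b ^ 2 * (ζ * s τ / (c τ + κ * s τ)) ^ 2
        + 2 * κ * (ζ * s τ / (c τ + κ * s τ)) - ζ)) τ := by
  refine ((hs.const_mul ζ).div (hc.add (hs.const_mul κ)) hD).congr_deriv ?_
  simp only [Pi.add_apply]
  field_simp
  ring

theorem mul_cos_add_mul_sin_eq {ω κ : ℝ} (hκ : κ ≠ 0) (θ : ℝ) :
    ω * cos θ + κ * sin θ = κ * √(1 + (ω / κ) ^ 2) * sin (θ + arctan (ω / κ)) := by
  rw [sin_add, cos_arctan, sin_arctan]
  have : 0 < √(1 + (ω / κ) ^ 2) := by positivity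
  field_simp
  ring

theorem mul_cos_add_mul_sin_pos {ω κ θ : ℝ} (hω : 0 < ω) (hκ : 0 < κ) (hθ₀ : 0 ≤ θ)
    (hθ : θ < π - arctan (ω / κ)) : 0 < ω * cos θ + κ * sin θ := by
  rw [mul_cos_add_mul_sin_eq hκ.ne']
  have harctan : 0 < arctan (ω / κ) := arctan_pos.mpr (div_pos hω hκ)
  have := sin_pos_of_pos_of_lt_pi (x := θ + arctan (ω / κ)) (by linarith) (by linarith)
  positivity

theorem exists_riccati_solution_of_linear {s c : ℝ → ℝ} {b κ ζ T : ℝ} (hζ : 0 ≤ ζ)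
    (hs : ∀ τ, HasDerivAt s (c τ) τ)
    (hc : ∀ τ, HasDerivAt c ((κ ^ 2 - 2 * b ^ 2 * ζ) * s τ) τ)
    (hs₀ : s 0 = 0) (hs_nonneg : ∀ τ ∈ Icc 0 T, 0 ≤ s τ)
    (hD : ∀ τ ∈ Icc 0 T, 0 < c τ + κ * s τ) :
    ∃ g, IsNonnegRiccatiSolution b κ ζ T g := by
  have hrev : ∀ t ∈ Icc 0 T, T - t ∈ Icc 0 T :=
    fun t ht => ⟨by linarith [ht.2], by linarith [ht.1]⟩
  refine ⟨fun t => ζ * s (T - t) / (c (T - t) + κ * s (T - t)), by simp [hs₀], fun t ht => ?_,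
    fun t ht => ?_⟩
  · exact div_nonneg (mul_nonneg hζ (hs_nonneg _ (hrev t ht))) (hD _ (hrev t ht)).le
  · have h := (hasDerivAt_riccati_of_linear (hs (T - t)) (hc (T - t))
      (hD _ (hrev t ht)).ne').comp t ((hasDerivAt_id t).const_sub T)
    exact h.congr_deriv (by ring)

theorem exists_riccati_solution_of_discr_eq_zero {b κ ζ T : ℝ} (hκ : 0 ≤ κ) (hζ : 0 ≤ ζ)
    (hΔ : 2 * b ^ 2 * ζ - κ ^ 2 = 0) :
    ∃ g, IsNonnegRiccatiSolution b κ ζ T g := by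
  refine exists_riccati_solution_of_linear (s := id) (c := fun _ => 1) hζ hasDerivAt_id
    (fun τ => (hasDerivAt_const τ 1).congr_deriv ?_) rfl (fun τ hτ => hτ.1)
    (fun τ hτ => add_pos_of_pos_of_nonneg one_pos (mul_nonneg hκ hτ.1))
  rw [show κ ^ 2 - 2 * b ^ 2 * ζ = 0 by linarith, zero_mul]

theorem exists_riccati_solution_of_discr_neg {b κ ζ T : ℝ} (hκ : 0 ≤ κ) (hζ : 0 ≤ ζ)
    (hΔ : 2 * b ^ 2 * ζ - κ ^ 2 < 0) :
    ∃ g, IsNonnegRiccatiSolution b κ ζ T g := by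
  set μ := √(κ ^ 2 - 2 * b ^ 2 * ζ)
  have hμ : 0 < μ := sqrt_pos.mpr (by linarith)
  have hμ_sq : μ ^ 2 = κ ^ 2 - 2 * b ^ 2 * ζ := sq_sqrt (by linarith)
  have hsinh_nonneg : ∀ τ ∈ Icc (0 : ℝ) T, 0 ≤ sinh (μ * τ) :=
    fun τ hτ => sinh_nonneg_iff.mpr (mul_nonneg hμ.le hτ.1)
  refine exists_riccati_solution_of_linear (s := fun τ => sinh (μ * τ))
    (c := fun τ => μ * cosh (μ * τ)) hζ (fun τ => ?_) (fun τ => ?_) (by simp) hsinh_nonneg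
    (fun τ hτ => by have := hsinh_nonneg τ hτ; positivity)
  · exact ((hasDerivAt_id' τ).const_mul μ).sinh.congr_deriv (by ring)
  · exact (((hasDerivAt_id' τ).const_mul μ).cosh.const_mul μ).congr_deriv
      (by rw [← hμ_sq]; ring)

theorem exists_riccati_solution_of_discr_pos {b κ ζ T : ℝ} (hκ : 0 < κ) (hζ : 0 ≤ ζ)
    (hΔ : 0 < 2 * b ^ 2 * ζ - κ ^ 2)
    (hT : T < (π - arctan (√(2 * b ^ 2 * ζ - κ ^ 2) / κ)) / √(2 * b ^ 2 * ζ - κ ^ 2)) :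
    ∃ g, IsNonnegRiccatiSolution b κ ζ T g := by
  set ω := √(2 * b ^ 2 * ζ - κ ^ 2)
  have hω : 0 < ω := sqrt_pos.mpr hΔ
  have hω_sq : ω ^ 2 = 2 * b ^ 2 * ζ - κ ^ 2 := sq_sqrt hΔ.le
  have hphase : ∀ τ ∈ Icc (0 : ℝ) T, 0 ≤ ω * τ ∧ ω * τ < π - arctan (ω / κ) := by
    intro τ hτ
    have := (lt_div_iff₀ hω).mp hT
    exact ⟨mul_nonneg hω.le hτ.1, by nlinarith [hτ.2]⟩
  refine exists_riccati_solution_of_linear (s := fun τ => sin (ω * τ))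
    (c := fun τ => ω * cos (ω * τ)) hζ (fun τ => ?_) (fun τ => ?_) (by simp)
    (fun τ hτ => ?_) (fun τ hτ => ?_)
  · exact ((hasDerivAt_id' τ).const_mul ω).sin.congr_deriv (by ring)
  · exact (((hasDerivAt_id' τ).const_mul ω).cos.const_mul ω).congr_deriv
      (by linear_combination -sin (ω * τ) * hω_sq)
  · have harctan : 0 < arctan (ω / κ) := arctan_pos.mpr (div_pos hω hκ)
    exact sin_nonneg_of_nonneg_of_le_pi (hphase τ hτ).1 (by linarith [(hphase τ hτ).2])
  · exact mul_cos_add_mul_sin_pos hω hκ (hphase τ hτ).1 (hphase τ hτ).2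

theorem stmt11_general (κ b ζ T : ℝ) (hκ : 0 < κ) (hζ : 0 < ζ)
    (hcond : 2 * b ^ 2 * ζ - κ ^ 2 ≤ 0 ∨
      (0 < 2 * b ^ 2 * ζ - κ ^ 2 ∧
        T < (Real.pi - Real.arctan (Real.sqrt (2 * b ^ 2 * ζ - κ ^ 2) / κ)) /
          Real.sqrt (2 * b ^ 2 * ζ - κ ^ 2))) :
    ∃ g : ℝ → ℝ, g T = 0 ∧ (∀ t ∈ Icc (0 : ℝ) T, 0 ≤ g t) ∧
      (∀ t ∈ Icc (0 : ℝ) T,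
        HasDerivAt g (-2 * b ^ 2 * g t ^ 2 + 2 * κ * g t - ζ) t) ∧
      (∀ w : ℝ → ℝ, w T = 0 →
        (∀ t ∈ Icc (0 : ℝ) T,
          HasDerivAt w (-2 * b ^ 2 * w t ^ 2 + 2 * κ * w t - ζ) t) →
        ∀ t ∈ Icc (0 : ℝ) T, w t = g t) := by
  obtain ⟨g, hgT, hg_nonneg, hg⟩ : ∃ g, IsNonnegRiccatiSolution b κ ζ T g := by
    rcases hcond with hΔ | ⟨hΔ, hT⟩
    · rcases hΔ.lt_or_eq with hΔ | hΔ
      · exact exists_riccati_solution_of_discr_neg hκ.le hζ.le hΔ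
      · exact exists_riccati_solution_of_discr_eq_zero hκ.le hζ.le hΔ
    · exact exists_riccati_solution_of_discr_pos hκ hζ.le hΔ hT
  refine ⟨g, hgT, hg_nonneg, hg, fun w hwT hw => ?_⟩
  have hfield : ContDiff ℝ 1 fun x : ℝ => -2 * b ^ 2 * x ^ 2 + 2 * κ * x - ζ := by fun_prop
  exact eqOn_Icc_of_hasDerivAt_of_contDiff hfield hw hg (hwT.trans hgT.symm)

/-- Lemma B.3 / Proposition 4.1 parameter conditions: under `Δ ≤ 0`, or
`Δ > 0` and `T < (π - arctan(√Δ/κ))/√Δ`, the terminal value Riccati problem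
`g' = -2 b² g² + 2κ g - ζ`, `g T = 0` has a (unique) nonnegative solution on
`[0, T]`. -/
theorem stmt11 (κ b ζ T : ℝ) (hκ : 0 < κ) (hb : b ≠ 0) (hζ : 0 < ζ) (hT : 0 < T)
    (hcond : 2 * b ^ 2 * ζ - κ ^ 2 ≤ 0 ∨
      (0 < 2 * b ^ 2 * ζ - κ ^ 2 ∧
        T < (Real.pi - Real.arctan (Real.sqrt (2 * b ^ 2 * ζ - κ ^ 2) / κ)) /
          Real.sqrt (2 * b ^ 2 * ζ - κ ^ 2))) :
    ∃ g : ℝ → ℝ, g T = 0 ∧ (∀ t ∈ Icc (0 : ℝ) T, 0 ≤ g t) ∧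
      (∀ t ∈ Icc (0 : ℝ) T,
        HasDerivAt g (-2 * b ^ 2 * g t ^ 2 + 2 * κ * g t - ζ) t) ∧
      (∀ w : ℝ → ℝ, w T = 0 →
        (∀ t ∈ Icc (0 : ℝ) T,
          HasDerivAt w (-2 * b ^ 2 * w t ^ 2 + 2 * κ * w t - ζ) t) →
        ∀ t ∈ Icc (0 : ℝ) T, w t = g t) :=
  stmt11_general κ b ζ T hκ hζ hcond
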